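/- In a residual graph R arising from a graph G in which the degree sum of adjacent vertices is at least 4, if u is a white leaf of R whose unique neighbor x is white, then x has degree at least 3 in R, and playing u decreases the total weight by at least 1 + 2 + 2·(deg(x) − 1) ≥ 5 when all neighbors of x other than u are blue leaves. -/

import Mathlib

open SimpleGraph Finset

inductive GameColor | white | green | blue | red
deriving DecidableEq

def GameColor.weight : GameColor → ℕ
  | white => 3
  | green => 2
  | blue => 1
  | red => 0

variable {V : Type} [Fintype V] [DecidableEq V]

/-- The set of vertices totally dominated by the played set `D`. -/
def totDom (G : SimpleGraph V) [DecidableRel G.Adj] (D : Finset V) : Finset V :=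
  Finset.univ.filter fun u => ∃ v ∈ D, G.Adj u v

/-- A vertex `v` is a legal move if playing it totally dominates a new vertex. -/
def isLegal (G : SimpleGraph V) [DecidableRel G.Adj] (D : Finset V) (v : V) : Prop :=
  ∃ u, G.Adj v u ∧ u ∉ totDom G D

instance (G : SimpleGraph V) [DecidableRel G.Adj] (D : Finset V) :
    DecidablePred (isLegal G D) := fun v =>
  decidable_of_iff (∃ u, G.Adj v u ∧ u ∉ totDom G D) Iff.rfl

/-- The color of a vertex in the partially total dominated graph with played set `D`. -/
def colorOf (G : SimpleGraph V) [DecidableRel G.Adj] (D : Finset V) (v : V) : GameColor :=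
  if v ∈ totDom G D then
    (if isLegal G D v then .blue else .red)
  else (if v ∈ D then .green else .white)

/-- The total weight of the colored graph. -/
def totalWeight (G : SimpleGraph V) [DecidableRel G.Adj] (D : Finset V) : ℕ :=
  ∑ v, (colorOf G D v).weight

/-- The residualGraph graph: delete red vertices and blue–blue edges. -/
def residualGraph (G : SimpleGraph V) [DecidableRel G.Adj] (D : Finset V) : SimpleGraph V where
  Adj u w := G.Adj u w ∧ colorOf G D u ≠ .red ∧ colorOf G D w ≠ .red ∧
      ¬(colorOf G D u = .blue ∧ colorOf G D w = .blue)
  symm := ⟨fun u w ⟨h, a, b, c⟩ => ⟨h.symm, b, a, fun ⟨x, y⟩ => c ⟨y, x⟩⟩⟩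
  loopless := ⟨fun u ⟨h, _⟩ => G.loopless.irrefl u h⟩

instance (G : SimpleGraph V) [DecidableRel G.Adj] (D : Finset V) :
    DecidableRel (residualGraph G D).Adj := fun u w =>
  decidable_of_iff (G.Adj u w ∧ colorOf G D u ≠ .red ∧ colorOf G D w ≠ .red ∧
      ¬(colorOf G D u = .blue ∧ colorOf G D w = .blue)) Iff.rfl

def legalMoves (G : SimpleGraph V) [DecidableRel G.Adj] (D : Finset V) : Finset V :=
  Finset.univ.filter (isLegal G D)

/-- The value of the total domination game from position `D` with `fuel` moves allowed,
where `isDom = true` when it is Dominator's turn (Dominator minimizes, Staller maximizes).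
Since each legal move totally dominates a new vertex, fuel `Fintype.card V` always suffices. -/
def gameVal (G : SimpleGraph V) [DecidableRel G.Adj] : Bool → ℕ → Finset V → ℕ
  | _, 0, _ => 0
  | isDom, n + 1, D =>
    if h : (legalMoves G D).Nonempty then
      if isDom then 1 + (legalMoves G D).inf' h fun v => gameVal G false n (insert v D)
      else 1 + (legalMoves G D).sup' h fun v => gameVal G true n (insert v D)
    else 0

/-- The game total domination number `γ_tg(G)`: Dominator starts, both play optimally. -/
def gtd (G : SimpleGraph V) [DecidableRel G.Adj] : ℕ :=
  gameVal G true (Fintype.card V) ∅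

/-! Playing the leaf `u` turns `u` from white to green and its neighbour `x` from white to at most
blue. A blue leaf `y` of the residual graph hanging at `x` can only be legal through `x`, because
every undominated neighbour of `y` is a residual neighbour; once `x` is dominated, `y` turns red.
This loses `1 + 2 + (deg x - 1)` weight, and `deg x ≥ 3` because an undominated vertex keeps its
whole neighbourhood in the residual graph while `deg u + deg x ≥ 4`. -/

section Coloring

variable (G : SimpleGraph V) [DecidableRel G.Adj] {D D' : Finset V} {u v x : V}

omit [DecidableEq V] in
lemma mem_totDom_iff : v ∈ totDom G D ↔ ∃ w ∈ D, G.Adj v w := by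
  simp [totDom]

omit [DecidableEq V] in
lemma totDom_mono (h : D ⊆ D') : totDom G D ⊆ totDom G D' := by
  intro v hv
  obtain ⟨w, hw, hvw⟩ := (mem_totDom_iff G).1 hv
  exact (mem_totDom_iff G).2 ⟨w, h hw, hvw⟩

omit [DecidableEq V] in
lemma isLegal_anti (h : D ⊆ D') (hv : isLegal G D' v) : isLegal G D v := by
  obtain ⟨w, hvw, hw⟩ := hv
  exact ⟨w, hvw, fun hw' => hw (totDom_mono G h hw')⟩

lemma colorOf_of_notMem_totDom (hv : v ∉ totDom G D) :
    colorOf G D v = if v ∈ D then .green else .white := by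
  simp [colorOf, hv]

lemma colorOf_eq_white_iff : colorOf G D v = .white ↔ v ∉ totDom G D ∧ v ∉ D := by
  unfold colorOf; split_ifs <;> simp_all

lemma colorOf_eq_red_iff : colorOf G D v = .red ↔ v ∈ totDom G D ∧ ¬ isLegal G D v := by
  unfold colorOf; split_ifs <;> simp_all

lemma mem_totDom_of_colorOf_eq_blue (hv : colorOf G D v = .blue) : v ∈ totDom G D := by
  by_contra h
  rw [colorOf_of_notMem_totDom G h] at hv
  split_ifs at hv

lemma weight_colorOf_le_one (hv : v ∈ totDom G D) : (colorOf G D v).weight ≤ 1 := by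
  unfold colorOf; split_ifs <;> simp [GameColor.weight]

lemma weight_colorOf_antitone (h : D ⊆ D') (v : V) :
    (colorOf G D' v).weight ≤ (colorOf G D v).weight := by
  have hdom : v ∈ totDom G D → v ∈ totDom G D' := fun hv => totDom_mono G h hv
  have hlegal : isLegal G D' v → isLegal G D v := isLegal_anti G h
  have hmem : v ∈ D → v ∈ D' := fun hv => h hv
  unfold colorOf
  split_ifs <;> simp_all [GameColor.weight]

lemma colorOf_insert_self_of_white (hu : colorOf G D u = .white) :
    colorOf G (insert u D) u = .green := by
  have hu' : u ∉ totDom G (insert u D) := by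
    rw [mem_totDom_iff]
    rintro ⟨w, hw, huw⟩
    rcases mem_insert.1 hw with rfl | hw
    · exact G.loopless.irrefl _ huw
    · exact ((colorOf_eq_white_iff G).1 hu).1 ((mem_totDom_iff G).2 ⟨w, hw, huw⟩)
  simp [colorOf_of_notMem_totDom G hu']

lemma mem_totDom_insert_of_adj (hxu : G.Adj x u) : x ∈ totDom G (insert u D) :=
  (mem_totDom_iff G).2 ⟨u, mem_insert_self u D, hxu⟩

end Coloring

section Residual

variable (G : SimpleGraph V) [DecidableRel G.Adj] {D D' : Finset V} {v w x y : V}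

lemma residualGraph_adj_of_notMem_totDom (hv : v ∉ totDom G D) (hvw : G.Adj v w) :
    (residualGraph G D).Adj v w := by
  have hw_legal : isLegal G D w := ⟨v, hvw.symm, hv⟩
  refine ⟨hvw, ?_, fun h => ((colorOf_eq_red_iff G).1 h).2 hw_legal, fun h => ?_⟩
  · rw [colorOf_of_notMem_totDom G hv]; split_ifs <;> simp
  · have := h.1; rw [colorOf_of_notMem_totDom G hv] at this; split_ifs at this

lemma residualGraph_degree_of_notMem_totDom (hv : v ∉ totDom G D) :
    (residualGraph G D).degree v = G.degree v := by
  unfold degree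
  congr 1
  ext w
  simp only [mem_neighborFinset]
  exact ⟨fun h => h.1, residualGraph_adj_of_notMem_totDom G hv⟩

lemma colorOf_eq_red_of_residualGraph_leaf (hy : colorOf G D y = .blue)
    (hleaf : (residualGraph G D).degree y = 1) (hyx : (residualGraph G D).Adj y x)
    (h : D ⊆ D') (hx : x ∈ totDom G D') : colorOf G D' y = .red := by
  refine (colorOf_eq_red_iff G).2
    ⟨totDom_mono G h (mem_totDom_of_colorOf_eq_blue G hy), ?_⟩
  rintro ⟨w, hyw, hw⟩
  have hw_D : w ∉ totDom G D := fun hw' => hw (totDom_mono G h hw')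
  have hwx : w = x := (degree_eq_one_iff_existsUnique_adj.1 hleaf).unique
    (residualGraph_adj_of_notMem_totDom G hw_D hyw.symm).symm hyx
  exact hw (hwx ▸ hx)

end Residual

section Weight

variable (G : SimpleGraph V) [DecidableRel G.Adj] {D D' : Finset V} {u x : V}

lemma totalWeight_add_le_of_subset (h : D ⊆ D') (T : Finset V) {k : ℕ}
    (hT : ∑ v ∈ T, (colorOf G D' v).weight + k ≤ ∑ v ∈ T, (colorOf G D v).weight) :
    totalWeight G D' + k ≤ totalWeight G D := by
  have hrest : ∑ v ∈ univ \ T, (colorOf G D' v).weight ≤ ∑ v ∈ univ \ T, (colorOf G D v).weight :=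
    sum_le_sum fun v _ => weight_colorOf_antitone G h v
  rw [totalWeight, totalWeight, ← sum_sdiff (subset_univ T), ← sum_sdiff (subset_univ T)]
  omega

lemma totalWeight_insert_add_le (hu : colorOf G D u = .white) (hx : colorOf G D x = .white)
    (hux : G.Adj u x) (S : Finset V) (hxS : x ∉ S) (huS : u ∉ S)
    (hS : ∀ y ∈ S, colorOf G D y = .blue ∧ colorOf G (insert u D) y = .red) :
    totalWeight G (insert u D) + (3 + #S) ≤ totalWeight G D := by
  refine totalWeight_add_le_of_subset G (subset_insert u D) (insert u (insert x S)) ?_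
  have hu_xS : u ∉ insert x S := by simp [hux.ne, huS]
  have hS_before : ∑ y ∈ S, (colorOf G D y).weight = #S := by
    rw [sum_congr rfl fun y hy => by rw [(hS y hy).1]]; simp [GameColor.weight]
  have hS_after : ∑ y ∈ S, (colorOf G (insert u D) y).weight = 0 := by
    rw [sum_congr rfl fun y hy => by rw [(hS y hy).2]]; simp [GameColor.weight]
  have hx_after := weight_colorOf_le_one G (mem_totDom_insert_of_adj G (D := D) hux.symm)
  rw [sum_insert hu_xS, sum_insert hxS, sum_insert hu_xS, sum_insert hxS, hS_before, hS_after, hu, hx,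
    colorOf_insert_self_of_white G hu]
  simp only [GameColor.weight] at hx_after ⊢
  omega

end Weight

/-- In a residual graph of a graph `G` in which adjacent degree sums are at
least 4, if `u` is a white leaf of the residual graph whose unique neighbor `x` is white,
then `x` has degree at least 3 in the residual graph, and, when all neighbors of `x` other
than `u` are blue leaves, playing `u` decreases the total weight by at least 5. -/
theorem stmt17 (G : SimpleGraph V) [DecidableRel G.Adj] (D : Finset V) (u x : V)
    (hdeg : ∀ a b, G.Adj a b → 4 ≤ G.degree a + G.degree b)
    (hu : colorOf G D u = .white) (huleaf : (residualGraph G D).degree u = 1)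
    (hux : (residualGraph G D).Adj u x) (hx : colorOf G D x = .white) :
    3 ≤ (residualGraph G D).degree x ∧
    ((∀ y, (residualGraph G D).Adj x y → y ≠ u →
        colorOf G D y = .blue ∧ (residualGraph G D).degree y = 1) →
      totalWeight G (insert u D) + 5 ≤ totalWeight G D) := by
  have hu_dom := ((colorOf_eq_white_iff G).1 hu).1
  have hx_dom := ((colorOf_eq_white_iff G).1 hx).1
  have hdx : 3 ≤ (residualGraph G D).degree x := by
    have := hdeg u x hux.1
    rw [residualGraph_degree_of_notMem_totDom G hx_dom]
    rw [residualGraph_degree_of_notMem_totDom G hu_dom] at huleaf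
    omega
  refine ⟨hdx, fun hleaves => ?_⟩
  set S := ((residualGraph G D).neighborFinset x).erase u
  have hS_card : #S = (residualGraph G D).degree x - 1 :=
    card_erase_of_mem ((mem_neighborFinset _ _ _).2 hux.symm)
  have hS : ∀ y ∈ S, colorOf G D y = .blue ∧ colorOf G (insert u D) y = .red := by
    intro y hy
    obtain ⟨hyu, hxy⟩ := mem_erase.1 hy
    obtain ⟨hy_blue, hy_leaf⟩ := hleaves y ((mem_neighborFinset _ _ _).1 hxy) hyu
    exact ⟨hy_blue, colorOf_eq_red_of_residualGraph_leaf G hy_blue hy_leaf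
      ((mem_neighborFinset _ _ _).1 hxy).symm (subset_insert u D)
      (mem_totDom_insert_of_adj G hux.1.symm)⟩
  have hdrop := totalWeight_insert_add_le G hu hx hux.1 S (by simp [S]) (by simp [S]) hS
  omega
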